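/- Let G be the Barnes G-function, defined by the Weierstrass product G(z+1) = (2π)^{z/2} e^{-(z + z²(1+γ))/2} ∏_{k=1}^∞ (1+z/k)^k e^{z²/(2k) - z}, where γ is the Euler–Mascheroni constant. Then G satisfies the functional equation G(z+1) = Γ(z) G(z) for all z where both sides are defined, and G(1) = 1. -/

import Mathlib

open Complex Real

/-- The Barnes G-function at `z + 1`, defined by the Weierstrass product
`G(z+1) = (2π)^{z/2} e^{-(z + z²(1+γ))/2} ∏_{k=1}^∞ (1+z/k)^k e^{z²/(2k) - z}`,
where `γ` is the Euler–Mascheroni constant. -/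
noncomputable def barnesGSucc (z : ℂ) : ℂ :=
  (2 * Real.pi : ℂ) ^ (z / 2) *
    Complex.exp (-(z + z ^ 2 * (1 + (Real.eulerMascheroniConstant : ℂ))) / 2) *
    ∏' k : ℕ, ((1 + z / ((k : ℂ) + 1)) ^ ((k : ℕ) + 1) *
      Complex.exp (z ^ 2 / (2 * ((k : ℂ) + 1)) - z))

/-- The Barnes G-function. -/
noncomputable def barnesG (z : ℂ) : ℂ := barnesGSucc (z - 1)

section BarnesAux

open Filter Finset Topology Nat

noncomputable def bFac (z : ℂ) (k : ℕ) : ℂ :=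
  (1 + z / ((k : ℂ) + 1)) ^ ((k : ℕ) + 1) * Complex.exp (z ^ 2 / (2 * ((k : ℂ) + 1)) - z)

noncomputable def bLog (z : ℂ) (k : ℕ) : ℂ :=
  ((k : ℂ) + 1) * Complex.log (1 + z / ((k : ℂ) + 1)) + (z ^ 2 / (2 * ((k : ℂ) + 1)) - z)

lemma natC_ne (m : ℕ) : ((m : ℂ) + 1) ≠ 0 := by
  rw [show ((m:ℂ)+1) = (((m:ℝ)+1 : ℝ) : ℂ) by push_cast; ring]
  exact Complex.ofReal_ne_zero.mpr (by positivity)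

lemma natC_norm (m : ℕ) : ‖(m : ℂ) + 1‖ = (m : ℝ) + 1 := by
  rw [show ((m:ℂ)+1) = ((m+1 : ℕ) : ℂ) by push_cast; ring, Complex.norm_natCast]
  push_cast; ring

lemma bFac_eq_exp {z : ℂ} {k : ℕ} (h : 1 + z / ((k : ℂ) + 1) ≠ 0) :
    bFac z k = Complex.exp (bLog z k) := by
  have h1 : ((k:ℂ)+1) = ((k+1 : ℕ) : ℂ) := by push_cast; ring
  rw [bFac, bLog, Complex.exp_add, h1, Complex.exp_nat_mul,
    Complex.exp_log (by rwa [← h1])]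

lemma logTaylor_three (x : ℂ) : Complex.logTaylor 3 x = x - x ^ 2 / 2 := by
  simp [Complex.logTaylor, Finset.sum_range_succ]
  ring

lemma summable_bLog (z : ℂ) : Summable (bLog z) := by
  obtain ⟨N, hN⟩ := exists_nat_ge (2 * ‖z‖)
  rw [← summable_nat_add_iff N]
  have key : ∀ k : ℕ, ‖bLog z (k + N)‖ ≤ (2 / 3) * ‖z‖ ^ 3 * (1 / ((k : ℝ) + 1) ^ 2) := by
    intro k
    set m : ℕ := k + N with hmdef
    have hm0 : ((m : ℂ) + 1) ≠ 0 := natC_ne m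
    set x : ℂ := z / ((m : ℂ) + 1) with hx
    have hxnorm : ‖x‖ = ‖z‖ / ((m : ℝ) + 1) := by
      rw [hx, norm_div, natC_norm]
    have hNm : (N : ℝ) ≤ (m : ℝ) := by exact_mod_cast Nat.le_add_left N k
    have hxhalf : ‖x‖ ≤ 1 / 2 := by
      rw [hxnorm, div_le_div_iff₀ (by positivity) (by norm_num)]
      nlinarith [hN]
    have hxlt : ‖x‖ < 1 := lt_of_le_of_lt hxhalf (by norm_num)
    have heq : bLog z m = ((m : ℂ) + 1) * (Complex.log (1 + x) - Complex.logTaylor 3 x) := by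
      rw [bLog, logTaylor_three, hx]
      field_simp
      ring
    have hb := Complex.norm_log_sub_logTaylor_le 2 hxlt
    have h1x : (1 - ‖x‖)⁻¹ ≤ 2 := by
      rw [inv_le_comm₀ (by linarith) (by norm_num)]
      linarith
    have h1x' : (0:ℝ) ≤ (1 - ‖x‖)⁻¹ := by
      have : (0:ℝ) < 1 - ‖x‖ := by linarith
      positivity
    rw [heq, norm_mul, natC_norm]
    have hxn : (0:ℝ) ≤ ‖x‖ := norm_nonneg x
    have step1 : ‖Complex.log (1 + x) - Complex.logTaylor (2+1) x‖ ≤ ‖x‖ ^ 3 * 2 / 3 := by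
      refine hb.trans ?_
      have h3 : ‖x‖ ^ (2+1) = ‖x‖ ^ 3 := by norm_num
      rw [h3, show ((2:ℕ):ℝ) + 1 = 3 by norm_num,
        div_le_div_iff₀ (by norm_num) (by norm_num)]
      nlinarith [mul_le_mul_of_nonneg_left h1x (pow_nonneg hxn 3)]
    have hk1 : ((k : ℝ) + 1) ≤ (m : ℝ) + 1 := by
      have : (k : ℝ) ≤ (m : ℝ) := by exact_mod_cast Nat.le_add_right k N
      linarith
    calc ((m : ℝ) + 1) * ‖Complex.log (1 + x) - Complex.logTaylor 3 x‖
        ≤ ((m : ℝ) + 1) * (‖x‖ ^ 3 * 2 / 3) :=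
          mul_le_mul_of_nonneg_left step1 (by positivity)
      _ = (2/3) * ‖z‖ ^ 3 * (1 / ((m : ℝ) + 1) ^ 2) := by
          rw [hxnorm]; field_simp
      _ ≤ (2/3) * ‖z‖ ^ 3 * (1 / ((k : ℝ) + 1) ^ 2) := by
          gcongr
  have hsum : Summable (fun k : ℕ => (2/3) * ‖z‖ ^ 3 * (1 / ((k : ℝ) + 1) ^ 2)) := by
    apply Summable.mul_left
    have h2 := (summable_nat_add_iff 1).mpr (Real.summable_one_div_nat_pow.mpr one_lt_two)
    apply h2.congr
    intro k
    push_cast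
    ring
  exact Summable.of_norm_bounded hsum key

noncomputable def Hc (n : ℕ) : ℂ := ((harmonic n : ℝ) : ℂ)

lemma Hc_succ (n : ℕ) : Hc (n + 1) = Hc n + 1 / ((n : ℂ) + 1) := by
  rw [Hc, Hc, harmonic_succ]
  push_cast
  ring

lemma prod_ratio (z : ℂ) (n : ℕ) :
    (∏ k ∈ range n, bFac z k) * (∏ k ∈ range n, (z + k)) =
      ((n : ℂ) + z) ^ n * Complex.exp ((z - 1/2) * Hc n - n) *
        ∏ k ∈ range n, bFac (z - 1) k := by
  induction n with
  | zero => simp [Hc, harmonic_zero]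
  | succ n ih =>
    rw [prod_range_succ, prod_range_succ, prod_range_succ, mul_mul_mul_comm, ih]
    have hexp : Complex.exp (z ^ 2 / (2 * ((n:ℂ) + 1)) - z) *
        Complex.exp ((z - 1/2) * Hc n - n) =
        Complex.exp ((z - 1/2) * Hc (n+1) - ((n:ℕ)+1 : ℕ)) *
          Complex.exp ((z-1) ^ 2 / (2 * ((n:ℂ) + 1)) - (z-1)) := by
      rw [← Complex.exp_add, ← Complex.exp_add, Hc_succ]
      congr 1
      push_cast
      field_simp [natC_ne n]
      ring
    have hpow : ((n:ℂ) + z) ^ n * (1 + z / ((n:ℂ) + 1)) ^ (n + 1) * (z + (n:ℂ)) =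
        (((n:ℕ)+1 : ℕ) + z) ^ (n + 1) * (1 + (z-1) / ((n:ℂ) + 1)) ^ (n + 1) := by
      have h1 : (1 + z/((n:ℂ)+1)) = ((n:ℂ)+1+z)/((n:ℂ)+1) := by
        field_simp [natC_ne n]
      have h2 : (1 + (z-1)/((n:ℂ)+1)) = ((n:ℂ)+z)/((n:ℂ)+1) := by
        field_simp [natC_ne n]
        ring
      have h3 : (((n:ℕ)+1 : ℕ) : ℂ) = (n:ℂ)+1 := by push_cast; ring
      rw [h1, h2, h3, div_pow, div_pow]
      have h4 : (((n:ℂ)+1)^(n+1)) ≠ 0 := pow_ne_zero _ (natC_ne n)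
      field_simp
      ring
    rw [bFac, bFac]
    linear_combination (∏ k ∈ range n, bFac (z - 1) k) * (Complex.exp (z ^ 2 / (2 * ((n:ℂ) + 1)) - z) *
        Complex.exp ((z - 1/2) * Hc n - n)) * hpow +
      (∏ k ∈ range n, bFac (z - 1) k) * ((((n:ℕ)+1 : ℕ) : ℂ) + z) ^ (n + 1) *
        (1 + (z-1) / ((n:ℂ) + 1)) ^ (n + 1) * hexp

lemma stirling_fact (n : ℕ) (hn : 0 < n) :
    ((n:ℝ)) ^ (n + 1) * Real.exp (-(Real.log n) / 2 - n) *
      (Real.sqrt 2 * Stirling.stirlingSeq n) = (n ! : ℝ) := by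
  have hnR : (0:ℝ) < n := by exact_mod_cast hn
  have hs : Real.sqrt n = Real.exp (Real.log n / 2) := by
    rw [Real.sqrt_eq_rpow, Real.rpow_def_of_pos hnR]
    ring_nf
  have hss : Real.exp (Real.log n / 2) * Real.exp (Real.log n / 2) = n := by
    rw [← Real.exp_add, show Real.log n / 2 + Real.log n / 2 = Real.log n by ring]
    exact Real.exp_log hnR
  have hE : Real.exp ((n:ℝ)) = Real.exp 1 ^ n := by
    rw [← Real.exp_nat_mul]; norm_num
  have hsplit : Real.exp (-(Real.log n) / 2 - n) =
      (Real.exp (Real.log n / 2) * Real.exp 1 ^ n)⁻¹ := by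
    rw [← hE, ← Real.exp_add, ← Real.exp_neg]
    congr 1
    ring
  rw [Stirling.stirlingSeq, Real.sqrt_mul (by norm_num : (0:ℝ) ≤ 2), hs, hsplit, div_pow]
  have h1 : Real.exp (Real.log n / 2) ≠ 0 := (Real.exp_pos _).ne'
  have h2 : Real.exp 1 ^ n ≠ 0 := pow_ne_zero _ (Real.exp_pos _).ne'
  have h3 : Real.sqrt 2 ≠ 0 := by positivity
  have h4 : (n:ℝ) ^ n ≠ 0 := pow_ne_zero _ hnR.ne'
  field_simp
  linear_combination (-(n:ℝ)^n) * hss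

lemma tendsto_one_add_div_pow_cexp (z : ℂ) :
    Tendsto (fun n : ℕ => (1 + z / (n:ℂ)) ^ (n + 1)) atTop (𝓝 (Complex.exp z)) := by
  have hnorm : ∀ n : ℕ, 0 < n → ‖z / (n:ℂ)‖ = ‖z‖ / n := by
    intro n hn
    rw [norm_div, Complex.norm_natCast]
  have ht1 : Tendsto (fun n : ℕ => ((n:ℂ) + 1) * (Complex.log (1 + z/(n:ℂ)) - z/(n:ℂ)))
      atTop (𝓝 0) := by
    apply squeeze_zero_norm' (a := fun n : ℕ => 4 * ‖z‖ ^ 2 / n)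
    · obtain ⟨N, hN⟩ := exists_nat_ge (2 * ‖z‖ + 1)
      filter_upwards [eventually_ge_atTop (max N 1)] with n hn
      have hn1 : 1 ≤ n := le_trans (le_max_right N 1) hn
      have hnN : (N:ℝ) ≤ n := by exact_mod_cast le_trans (le_max_left N 1) hn
      have hnR : (0:ℝ) < n := by exact_mod_cast hn1
      have hw : ‖z / (n:ℂ)‖ ≤ 1/2 := by
        rw [hnorm n (by omega), div_le_div_iff₀ hnR (by norm_num)]
        nlinarith
      have hwlt : ‖z / (n:ℂ)‖ < 1 := lt_of_le_of_lt hw (by norm_num)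
      have hb := Complex.norm_log_one_add_sub_self_le hwlt
      have h1x : (1 - ‖z / (n:ℂ)‖)⁻¹ ≤ 2 := by
        rw [inv_le_comm₀ (by linarith) (by norm_num)]
        linarith
      rw [norm_mul, natC_norm]
      have hb2 : ‖Complex.log (1 + z/(n:ℂ)) - z/(n:ℂ)‖ ≤ ‖z‖^2 / n^2 := by
        refine hb.trans ?_
        have h5 : ‖z / (n:ℂ)‖^2 * (1 - ‖z / (n:ℂ)‖)⁻¹ ≤ ‖z / (n:ℂ)‖^2 * 2 :=
          mul_le_mul_of_nonneg_left h1x (sq_nonneg _)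
        have h6 : ‖z / (n:ℂ)‖^2 = ‖z‖^2 / (n:ℝ)^2 := by
          rw [hnorm n (by omega), div_pow]
        nlinarith
      calc ((n:ℝ) + 1) * ‖Complex.log (1 + z/(n:ℂ)) - z/(n:ℂ)‖
          ≤ ((n:ℝ) + 1) * (‖z‖^2 / n^2) := by gcongr
        _ = (((n:ℝ) + 1) * ‖z‖^2) / n^2 := by ring
        _ ≤ 4 * ‖z‖ ^ 2 / n := by
            rw [div_le_div_iff₀ (pow_pos hnR 2) hnR]
            have hnR1 : (1:ℝ) ≤ (n:ℝ) := by exact_mod_cast hn1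
            nlinarith [sq_nonneg ‖z‖, mul_nonneg (mul_nonneg (sq_nonneg ‖z‖) hnR.le)
              (by linarith : (0:ℝ) ≤ 3*(n:ℝ) - 1)]
    · have := tendsto_const_div_atTop_nhds_zero_nat (4 * ‖z‖ ^ 2)
      exact this
  have ht2 : Tendsto (fun n : ℕ => z / (n:ℂ)) atTop (𝓝 0) := by
    apply squeeze_zero_norm' (a := fun n : ℕ => ‖z‖ / n)
    · filter_upwards [eventually_ge_atTop 1] with n hn
      rw [hnorm n (by omega)]
    · exact tendsto_const_div_atTop_nhds_zero_nat _
  have ha : Tendsto (fun n : ℕ => ((n:ℂ) + 1) * Complex.log (1 + z/(n:ℂ))) atTop (𝓝 z) := by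
    have hsum : Tendsto (fun n : ℕ =>
        ((n:ℂ) + 1) * (Complex.log (1 + z/(n:ℂ)) - z/(n:ℂ)) + (z + z/(n:ℂ)))
        atTop (𝓝 (0 + (z + 0))) := ht1.add (tendsto_const_nhds.add ht2)
    rw [zero_add, add_zero] at hsum
    apply hsum.congr'
    filter_upwards [eventually_ge_atTop 1] with n hn
    have hn0 : (n:ℂ) ≠ 0 := by
      exact_mod_cast Nat.cast_ne_zero.mpr (by omega)
    field_simp
    ring
  have hexp := ha.cexp
  apply hexp.congr'
  obtain ⟨N, hN⟩ := exists_nat_ge ‖z‖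
  filter_upwards [eventually_gt_atTop N] with n hn
  have hnR : ‖z‖ < n := by
    calc ‖z‖ ≤ N := hN
      _ < n := by exact_mod_cast hn
  have hne : 1 + z / (n:ℂ) ≠ 0 := by
    intro h
    have h2 : z / (n:ℂ) = -1 := by linear_combination h
    have := congrArg norm h2
    rw [hnorm n (by omega)] at this
    simp at this
    rw [div_eq_one_iff_eq (by exact_mod_cast (by omega : n ≠ 0) : ((n:ℝ) ≠ 0))] at this
    exact absurd this (ne_of_lt hnR)
  have h1 : ((n:ℂ)+1) = ((n+1 : ℕ) : ℂ) := by push_cast; ring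
  rw [h1, Complex.exp_nat_mul, Complex.exp_log hne]

lemma rseq_eq (z : ℂ) (hz : ∀ n : ℕ, z ≠ -(n : ℂ)) {n : ℕ} (hn : 0 < n) :
    ((n:ℂ) + z) ^ n * Complex.exp ((z - 1/2) * Hc n - n) / ∏ k ∈ range n, (z + k) =
    Complex.GammaSeq z n * (1 + z / (n:ℂ)) ^ (n + 1) *
      Complex.exp ((z - 1/2) * (((harmonic n : ℝ) - Real.log n : ℝ) : ℂ)) *
      (((Real.sqrt 2 * Stirling.stirlingSeq n)⁻¹ : ℝ) : ℂ) := by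
  have hZ : ∀ k : ℕ, z + (k:ℂ) ≠ 0 := fun k h => hz k (by linear_combination h)
  have hprod : (∏ k ∈ range n, (z + (k:ℂ))) ≠ 0 :=
    prod_ne_zero_iff.mpr fun k _ => hZ k
  have hnC : ((n:ℂ)) ≠ 0 := Nat.cast_ne_zero.mpr hn.ne'
  have hnR : (0:ℝ) < n := by exact_mod_cast hn
  have hstpos : 0 < Stirling.stirlingSeq n := by
    have h5 := Stirling.stirlingSeq'_pos (n - 1)
    rwa [show n - 1 + 1 = n by omega] at h5
  have hst : Real.sqrt 2 * Stirling.stirlingSeq n ≠ 0 := by positivity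
  have pw : ((n:ℂ) + z) ^ (n+1) = (n:ℂ)^(n+1) * (1 + z/(n:ℂ))^(n+1) := by
    rw [← mul_pow]
    congr 1
    field_simp
  have cpow1 : ((n:ℂ)) ^ z = Complex.exp (z * (Real.log n : ℂ)) := by
    rw [Complex.cpow_def_of_ne_zero hnC, Complex.natCast_log, mul_comm]
  have split1 : Complex.exp ((z - 1/2) * Hc n - n) =
      Complex.exp ((z - 1/2) * (((harmonic n : ℝ) - Real.log n : ℝ) : ℂ)) *
      Complex.exp (z * (Real.log n : ℂ)) *
      Complex.exp (-(Real.log n : ℂ)/2 - n) := by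
    rw [← Complex.exp_add, ← Complex.exp_add, Hc]
    congr 1
    push_cast
    ring
  have hreal : ((n:ℂ)) ^ (n+1) * Complex.exp (-(Real.log n : ℂ)/2 - n) *
      ((Real.sqrt 2 * Stirling.stirlingSeq n : ℝ) : ℂ) = ((n ! : ℕ) : ℂ) := by
    have h := stirling_fact n hn
    calc ((n:ℂ)) ^ (n+1) * Complex.exp (-(Real.log n : ℂ)/2 - n) *
        ((Real.sqrt 2 * Stirling.stirlingSeq n : ℝ) : ℂ)
        = (((((n:ℝ)) ^ (n + 1) * Real.exp (-(Real.log n) / 2 - n) *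
            (Real.sqrt 2 * Stirling.stirlingSeq n)) : ℝ) : ℂ) := by
          push_cast [Complex.ofReal_exp]
          ring_nf
      _ = ((n ! : ℕ) : ℂ) := by rw [h]; norm_cast
  have key : ((n:ℂ)+z)^n * Complex.exp ((z - 1/2) * Hc n - n) * (z + (n:ℂ)) *
      ((Real.sqrt 2 * Stirling.stirlingSeq n : ℝ) : ℂ) =
      (n:ℂ)^z * ((n ! : ℕ) : ℂ) * (1 + z/(n:ℂ))^(n+1) *
        Complex.exp ((z - 1/2) * (((harmonic n : ℝ) - Real.log n : ℝ) : ℂ)) := by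
    calc ((n:ℂ)+z)^n * Complex.exp ((z - 1/2) * Hc n - n) * (z + (n:ℂ)) *
        ((Real.sqrt 2 * Stirling.stirlingSeq n : ℝ) : ℂ)
        = (((n:ℂ)+z)^(n+1)) * Complex.exp ((z - 1/2) * Hc n - n) *
            ((Real.sqrt 2 * Stirling.stirlingSeq n : ℝ) : ℂ) := by
          rw [pow_succ]; ring
      _ = ((n:ℂ)^(n+1) * (1 + z/(n:ℂ))^(n+1)) *
            (Complex.exp ((z - 1/2) * (((harmonic n : ℝ) - Real.log n : ℝ) : ℂ)) *
             Complex.exp (z * (Real.log n : ℂ)) *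
             Complex.exp (-(Real.log n : ℂ)/2 - n)) *
            ((Real.sqrt 2 * Stirling.stirlingSeq n : ℝ) : ℂ) := by
          rw [← pw, ← split1]
      _ = ((n:ℂ)^(n+1) * Complex.exp (-(Real.log n : ℂ)/2 - n) *
            ((Real.sqrt 2 * Stirling.stirlingSeq n : ℝ) : ℂ)) *
            (1 + z/(n:ℂ))^(n+1) *
            Complex.exp ((z - 1/2) * (((harmonic n : ℝ) - Real.log n : ℝ) : ℂ)) *
            Complex.exp (z * (Real.log n : ℂ)) := by ring
      _ = ((n ! : ℕ) : ℂ) * (1 + z/(n:ℂ))^(n+1) *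
            Complex.exp ((z - 1/2) * (((harmonic n : ℝ) - Real.log n : ℝ) : ℂ)) *
            Complex.exp (z * (Real.log n : ℂ)) := by rw [hreal]
      _ = (n:ℂ)^z * ((n ! : ℕ) : ℂ) * (1 + z/(n:ℂ))^(n+1) *
            Complex.exp ((z - 1/2) * (((harmonic n : ℝ) - Real.log n : ℝ) : ℂ)) := by
          rw [cpow1]; ring
  rw [Complex.GammaSeq, prod_range_succ]
  have hstC : ((Real.sqrt 2 * Stirling.stirlingSeq n : ℝ) : ℂ) ≠ 0 :=
    Complex.ofReal_ne_zero.mpr hst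
  have hinv : (((Real.sqrt 2 * Stirling.stirlingSeq n)⁻¹ : ℝ) : ℂ) =
      (((Real.sqrt 2 * Stirling.stirlingSeq n : ℝ) : ℂ))⁻¹ := by push_cast; ring
  rw [hinv]
  generalize hE1 : Complex.exp ((z - 1/2) * Hc n - (n:ℂ)) = E1 at key ⊢
  generalize hE2 : Complex.exp ((z - 1/2) * (((harmonic n : ℝ) - Real.log n : ℝ) : ℂ)) = E2
    at key ⊢
  generalize hC : ((Real.sqrt 2 * Stirling.stirlingSeq n : ℝ) : ℂ) = C at key hstC ⊢
  generalize hG : ((n:ℂ)) ^ z = G at key ⊢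
  generalize hW1 : (1 + z/((n:ℂ)))^(n+1) = W1 at key ⊢
  rw [div_eq_iff hprod]
  field_simp [hZ n, hstC]
  linear_combination key

lemma tendsto_rseq (z : ℂ) (hz : ∀ n : ℕ, z ≠ -(n:ℂ)) :
    Tendsto (fun n : ℕ => ((n:ℂ) + z) ^ n * Complex.exp ((z - 1/2) * Hc n - n) /
        ∏ k ∈ range n, (z + k))
      atTop (𝓝 (Complex.Gamma z * Complex.exp z *
        Complex.exp ((z - 1/2) * (Real.eulerMascheroniConstant : ℂ)) *
        (((Real.sqrt 2 * Real.sqrt Real.pi : ℝ) : ℂ))⁻¹)) := by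
  have l1 := Complex.GammaSeq_tendsto_Gamma z
  have l2 := tendsto_one_add_div_pow_cexp z
  have l3 : Tendsto (fun n : ℕ =>
      Complex.exp ((z - 1/2) * (((harmonic n : ℝ) - Real.log n : ℝ) : ℂ)))
      atTop (𝓝 (Complex.exp ((z - 1/2) * (Real.eulerMascheroniConstant : ℂ)))) := by
    apply Filter.Tendsto.cexp
    apply Filter.Tendsto.const_mul
    exact (Complex.continuous_ofReal.tendsto _).comp Real.tendsto_harmonic_sub_log
  have l4 : Tendsto (fun n : ℕ => (((Real.sqrt 2 * Stirling.stirlingSeq n)⁻¹ : ℝ) : ℂ))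
      atTop (𝓝 ((((Real.sqrt 2 * Real.sqrt Real.pi : ℝ) : ℂ))⁻¹)) := by
    rw [show ((((Real.sqrt 2 * Real.sqrt Real.pi : ℝ)) : ℂ))⁻¹ =
        (((Real.sqrt 2 * Real.sqrt Real.pi)⁻¹ : ℝ) : ℂ) by push_cast; ring]
    apply (Complex.continuous_ofReal.tendsto _).comp
    apply Filter.Tendsto.inv₀
    · exact Stirling.tendsto_stirlingSeq_sqrt_pi.const_mul _
    · positivity
  have hcomb := ((l1.mul l2).mul l3).mul l4
  apply hcomb.congr'
  filter_upwards [eventually_gt_atTop 0] with n hn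
  exact (rseq_eq z hz hn).symm

lemma hasProd_bFac {z : ℂ} (h : ∀ k : ℕ, 1 + z / ((k:ℂ)+1) ≠ 0) :
    HasProd (bFac z) (Complex.exp (∑' k, bLog z k)) := by
  have h2 : (fun k => Complex.exp (bLog z k)) = bFac z :=
    funext fun k => (bFac_eq_exp (h k)).symm
  have h3 := (summable_bLog z).hasSum.cexp
  rw [show (cexp ∘ bLog z) = fun k => Complex.exp (bLog z k) from rfl, h2] at h3
  exact h3

end BarnesAux

open Filter Finset Topology Nat in
/-- The Barnes G-function satisfies `G(z+1) = Γ(z) G(z)` wherever both sides are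
defined (i.e. away from the poles of `Γ`), and `G(1) = 1`. -/
theorem barnesG_functional_equation :
    barnesG 1 = 1 ∧
    ∀ z : ℂ, (∀ n : ℕ, z ≠ -(n : ℂ)) → barnesG (z + 1) = Complex.Gamma z * barnesG z := by
  constructor
  · rw [barnesG, barnesGSucc]
    norm_num
  · intro z hz
    have hb1 : barnesG (z+1) = barnesGSucc z := by rw [barnesG]; ring_nf
    have hb2 : barnesG z = barnesGSucc (z-1) := rfl
    rw [hb1, hb2]
    have hzk : ∀ k : ℕ, 1 + z / ((k:ℂ)+1) ≠ 0 := by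
      intro k h
      apply hz (k+1)
      have hk := natC_ne k
      field_simp at h
      push_cast
      linear_combination h
    have hzk' : ∀ k : ℕ, 1 + (z-1) / ((k:ℂ)+1) ≠ 0 := by
      intro k h
      apply hz k
      have hk := natC_ne k
      field_simp at h
      linear_combination h
    have hf := hasProd_bFac hzk
    have hg := hasProd_bFac hzk'
    set Pf := Complex.exp (∑' k, bLog z k) with hPfdef
    set Pg := Complex.exp (∑' k, bLog (z-1) k) with hPgdef
    have tf := hf.tendsto_prod_nat
    have tg := hg.tendsto_prod_nat
    have hZ : ∀ k : ℕ, z + (k:ℂ) ≠ 0 := fun k h => hz k (by linear_combination h)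
    have hprodS : ∀ n, (∏ k ∈ range n, (z + (k:ℂ))) ≠ 0 :=
      fun n => prod_ne_zero_iff.mpr fun k _ => hZ k
    have trseq := tendsto_rseq z hz
    have hfg := trseq.mul tg
    have heq : ∀ n : ℕ, (((n:ℂ)+z)^n * Complex.exp ((z-1/2)*Hc n - n) /
        ∏ k ∈ range n, (z+k)) * (∏ k ∈ range n, bFac (z-1) k) =
        ∏ k ∈ range n, bFac z k := by
      intro n
      rw [div_mul_eq_mul_div, div_eq_iff (hprodS n)]
      linear_combination -prod_ratio z n
    have hfg2 : Tendsto (fun n : ℕ => ∏ k ∈ range n, bFac z k) atTop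
        (𝓝 ((Complex.Gamma z * Complex.exp z *
          Complex.exp ((z - 1/2) * (Real.eulerMascheroniConstant : ℂ)) *
          (((Real.sqrt 2 * Real.sqrt Real.pi : ℝ) : ℂ))⁻¹) * Pg)) := by
      apply hfg.congr heq
    have hPfL : Pf = (Complex.Gamma z * Complex.exp z *
        Complex.exp ((z - 1/2) * (Real.eulerMascheroniConstant : ℂ)) *
        (((Real.sqrt 2 * Real.sqrt Real.pi : ℝ) : ℂ))⁻¹) * Pg :=
      tendsto_nhds_unique tf hfg2
    rw [barnesGSucc, barnesGSucc]
    have hPf : (∏' (k:ℕ), ((1 + z / ((k : ℂ) + 1)) ^ ((k : ℕ) + 1) *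
        Complex.exp (z ^ 2 / (2 * ((k : ℂ) + 1)) - z))) = Pf := hf.tprod_eq
    have hPg2 : (∏' (k:ℕ), ((1 + (z-1) / ((k : ℂ) + 1)) ^ ((k : ℕ) + 1) *
        Complex.exp ((z-1) ^ 2 / (2 * ((k : ℂ) + 1)) - (z-1)))) = Pg := hg.tprod_eq
    rw [hPf, hPg2, hPfL]
    -- scalar identity
    have h2pi : (0:ℝ) < 2 * Real.pi := by positivity
    have hcast : (2 * Real.pi : ℂ) = ((2 * Real.pi : ℝ) : ℂ) := by push_cast; ring
    have hc1 : ∀ w : ℂ, (2 * Real.pi : ℂ) ^ w =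
        Complex.exp ((Real.log (2 * Real.pi) : ℂ) * w) := by
      intro w
      rw [hcast, Complex.cpow_def_of_ne_zero (Complex.ofReal_ne_zero.mpr h2pi.ne') w,
        ← Complex.ofReal_log h2pi.le]
    have hsq : ((Real.sqrt 2 * Real.sqrt Real.pi : ℝ) : ℂ) =
        Complex.exp ((Real.log (2 * Real.pi) : ℂ) / 2) := by
      rw [← Real.sqrt_mul (by norm_num : (0:ℝ) ≤ 2) Real.pi,
        Real.sqrt_eq_rpow, Real.rpow_def_of_pos h2pi, Complex.ofReal_exp]
      congr 1
      push_cast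
      ring
    have hsqinv : (((Real.sqrt 2 * Real.sqrt Real.pi : ℝ) : ℂ))⁻¹ =
        Complex.exp (-((Real.log (2 * Real.pi) : ℂ) / 2)) := by
      rw [hsq, ← Complex.exp_neg]
    rw [hc1, hc1, hsqinv]
    have scalar : Complex.exp ((Real.log (2 * Real.pi) : ℂ) * (z / 2)) *
        Complex.exp (-(z + z ^ 2 * (1 + (Real.eulerMascheroniConstant : ℂ))) / 2) *
        (Complex.exp z * Complex.exp ((z - 1/2) * (Real.eulerMascheroniConstant : ℂ)) *
          Complex.exp (-((Real.log (2 * Real.pi) : ℂ) / 2))) =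
        Complex.exp ((Real.log (2 * Real.pi) : ℂ) * ((z - 1) / 2)) *
        Complex.exp (-((z - 1) + (z - 1) ^ 2 * (1 + (Real.eulerMascheroniConstant : ℂ))) / 2) := by
      rw [← Complex.exp_add, ← Complex.exp_add, ← Complex.exp_add, ← Complex.exp_add,
        ← Complex.exp_add]
      congr 1
      ring
    linear_combination (Complex.Gamma z * Pg) * scalar
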